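/- Suppose ν is a finite Borel measure on the closed unit ball B³ ⊂ ℝ³, and for each small t > 0 there is a measurable function f_t : B³ → [0,1] such that, writing m_t = ∫ f_t dν, R_t = ∫ f_t(r) r dν(r), one has |R_{t,⊥}| ≥ L t and m_t − R_{t,z} ≤ C t² for all sufficiently small t > 0, with constants L > 0, C < ∞. Then a contradiction follows; i.e., no such family (f_t) exists. -/

import Mathlib

open MeasureTheory Set Filter Topology Function

/-!
Put `u = 2 (1 - z)` and `w = |r_⊥|`; on the ball `w² ≤ u`, and the hypothesis says
`∫ f_t u ≤ 2 C t²`. Where `u ≥ s`, `w ≤ u / √s`; where `u < s` and `w ≠ 0`, AM-GM gives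
`w ≤ a / 2 + u / (2 a)`. With `a = k t` and `s = t` this bounds `L t ≤ ∫ f_t w` by
`t (k/2 · ν{w ≠ 0, u < t} + C/k + 2 C √t)`. The sets `{w ≠ 0, u < t}` shrink to a null set
as `t → 0`, because `u = 0` forces `w = 0`; hence `L ≤ C / k` for every `k > 0`, i.e. `L ≤ 0`.
-/

lemma le_half_add_div_of_sq_le {w u a : ℝ} (hwu : w ^ 2 ≤ u) (ha : 0 < a) :
    w ≤ a / 2 + u / (2 * a) := by
  rw [div_add_div _ _ two_ne_zero (by positivity), le_div_iff₀ (by positivity)]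
  nlinarith [sq_nonneg (w - a)]

lemma le_div_sqrt_of_sq_le {w u s : ℝ} (hwu : w ^ 2 ≤ u) (hs : 0 < s) (hsu : s ≤ u) :
    w ≤ u / √s := by
  rw [le_div_iff₀ (Real.sqrt_pos.2 hs)]
  refine le_of_pow_le_pow_left₀ two_ne_zero (hs.le.trans hsu) ?_ |>.trans' (le_abs_self _)
  rw [sq_abs, mul_pow, Real.sq_sqrt hs.le]
  nlinarith

section
variable {α : Type*} [MeasurableSpace α] {μ : Measure α} {u w : α → ℝ}

lemma tendsto_measureReal_support_inter_lt [IsFiniteMeasure μ] (hu : Measurable u)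
    (hw : Measurable w) (hwu : ∀ᵐ x ∂μ, w x ^ 2 ≤ u x) :
    Tendsto (fun s => μ.real (support w ∩ {x | u x < s})) (𝓝[>] 0) (𝓝 0) := by
  have hnull : μ (⋂ s > (0 : ℝ), support w ∩ {x | u x < s}) = 0 := by
    refine measure_mono_null (fun x hx => ?_) (ae_iff.1 hwu)
    simp only [mem_iInter, mem_inter_iff, mem_support, mem_ofPred_eq] at hx ⊢
    have hu0 : u x ≤ 0 := le_of_forall_gt fun s hs => (hx s hs).2
    have hw0 : w x ≠ 0 := (hx 1 one_pos).1
    exact fun h => hw0 <| pow_eq_zero_iff two_ne_zero |>.1 <|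
      le_antisymm (h.trans hu0) (sq_nonneg _)
  have := tendsto_measure_biInter_gt (μ := μ) (a := (0 : ℝ))
    (fun s _ => ((measurableSet_support hw).inter
      (measurableSet_lt hu measurable_const)).nullMeasurableSet)
    (fun s s' _ hss' => inter_subset_inter_right _ fun x hx => lt_of_lt_of_le hx hss')
    ⟨1, one_pos, measure_ne_top μ _⟩
  rw [hnull] at this
  exact (ENNReal.tendsto_toReal ENNReal.zero_ne_top).comp this

lemma integral_mul_le_of_sq_le [IsFiniteMeasure μ] (hu : Measurable u) (hw : Measurable w)
    (hui : Integrable u μ) (hwi : Integrable w μ) (hwu : ∀ᵐ x ∂μ, w x ^ 2 ≤ u x) {g : α → ℝ}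
    (hgm : AEStronglyMeasurable g μ) (hg : ∀ x, g x ∈ Icc 0 1) {a s : ℝ} (ha : 0 < a)
    (hs : 0 < s) :
    ∫ x, g x * w x ∂μ ≤ a / 2 * μ.real (support w ∩ {x | u x < s})
      + (∫ x, g x * u x ∂μ) / (2 * a) + (∫ x, g x * u x ∂μ) / √s := by
  set S := support w ∩ {x | u x < s}
  have hS : MeasurableSet S :=
    (measurableSet_support hw).inter (measurableSet_lt hu measurable_const)
  have hg_bdd : ∀ᵐ x ∂μ, ‖g x‖ ≤ 1 := ae_of_all _ fun x => by
    rw [Real.norm_of_nonneg (hg x).1]; exact (hg x).2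
  have hgu : Integrable (fun x => g x * u x) μ := hui.bdd_mul hgm hg_bdd
  have hpt : ∀ᵐ x ∂μ, g x * w x ≤
      S.indicator (fun _ => a / 2) x + g x * u x / (2 * a) + g x * u x / √s := by
    filter_upwards [hwu] with x hx
    obtain ⟨hg0, hg1⟩ := hg x
    have hgu0 : 0 ≤ g x * u x := mul_nonneg hg0 ((sq_nonneg _).trans hx)
    by_cases hxS : x ∈ S
    · rw [indicator_of_mem hxS]
      calc g x * w x ≤ g x * (a / 2 + u x / (2 * a)) :=
            mul_le_mul_of_nonneg_left (le_half_add_div_of_sq_le hx ha) hg0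
        _ ≤ a / 2 + g x * u x / (2 * a) := by
            rw [mul_add, mul_div_assoc]
            gcongr
            nlinarith
        _ ≤ _ := le_add_of_nonneg_right (by positivity)
    · rw [indicator_of_notMem hxS, zero_add]
      simp only [S, mem_inter_iff, mem_support, mem_ofPred_eq, not_and, not_lt] at hxS
      by_cases hw0 : w x = 0
      · rw [hw0, mul_zero]; positivity
      · calc g x * w x ≤ g x * (u x / √s) :=
              mul_le_mul_of_nonneg_left (le_div_sqrt_of_sq_le hx hs (hxS hw0)) hg0
          _ ≤ _ := by rw [← mul_div_assoc]; exact le_add_of_nonneg_left (by positivity)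
  have hind : Integrable (S.indicator fun _ => a / 2) μ := (integrable_const _).indicator hS
  have hind' : Integrable (fun x => S.indicator (fun _ => a / 2) x + g x * u x / (2 * a)) μ :=
    hind.add (hgu.div_const _)
  calc ∫ x, g x * w x ∂μ
      ≤ ∫ x, S.indicator (fun _ => a / 2) x + g x * u x / (2 * a) + g x * u x / √s ∂μ :=
        integral_mono_ae (hwi.bdd_mul hgm hg_bdd) (hind'.add (hgu.div_const _)) hpt
    _ = _ := by
        rw [integral_add hind' (hgu.div_const _), integral_add hind (hgu.div_const _),
          integral_indicator_const _ hS, integral_div, integral_div, smul_eq_mul, mul_comm]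

theorem nonpos_of_mul_le_integral_of_integral_le_mul_sq [IsFiniteMeasure μ]
    (hu : Measurable u) (hw : Measurable w) (hui : Integrable u μ) (hwi : Integrable w μ)
    (hwu : ∀ᵐ x ∂μ, w x ^ 2 ≤ u x) {g : ℝ → α → ℝ}
    (hgm : ∀ t, AEStronglyMeasurable (g t) μ) (hg : ∀ t x, g t x ∈ Icc 0 1) {L C ε : ℝ}
    (hε : 0 < ε)
    (h : ∀ t ∈ Ioo 0 ε,
      L * t ≤ ∫ x, g t x * w x ∂μ ∧ ∫ x, g t x * u x ∂μ ≤ C * t ^ 2) :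
    L ≤ 0 := by
  have hk : ∀ k > 0, L ≤ C / (2 * k) := by
    intro k hk
    set ρ := fun s => μ.real (support w ∩ {x | u x < s})
    have hbound : ∀ t ∈ Ioo 0 ε, L ≤ k / 2 * ρ t + C / (2 * k) + C * √t := by
      intro t ht
      obtain ⟨hLt, hCt⟩ := h t ht
      have ht0 : 0 < t := ht.1
      have hsqrt : 0 < √t := Real.sqrt_pos.2 ht0
      have hnear : (∫ x, g t x * u x ∂μ) / (2 * (k * t)) ≤ C / (2 * k) * t :=
        (div_le_iff₀ (by positivity)).2 (hCt.trans_eq (by field_simp))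
      have hfar : (∫ x, g t x * u x ∂μ) / √t ≤ C * √t * t :=
        (div_le_iff₀ hsqrt).2 <| hCt.trans_eq <| by
          linear_combination (-(C * t)) * Real.sq_sqrt ht0.le
      have := integral_mul_le_of_sq_le hu hw hui hwi hwu (hgm t) (hg t) (mul_pos hk ht0) ht0
      refine le_of_mul_le_mul_right ?_ ht0
      linarith
    have hlim : Tendsto (fun t => k / 2 * ρ t + C / (2 * k) + C * √t) (𝓝[>] 0)
        (𝓝 (C / (2 * k))) := by
      have hρ := tendsto_measureReal_support_inter_lt hu hw hwu (μ := μ)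
      have hs : Tendsto (fun t => √t) (𝓝[>] 0) (𝓝 0) := by
        simpa using (Real.continuous_sqrt.tendsto 0).mono_left nhdsWithin_le_nhds
      simpa using ((hρ.const_mul (k / 2)).add_const (C / (2 * k))).add (hs.const_mul C)
    exact ge_of_tendsto hlim (eventually_of_mem (Ioo_mem_nhdsGT hε) hbound)
  have hlim : Tendsto (fun k => C / (2 * k)) atTop (𝓝 0) :=
    tendsto_const_nhds.div_atTop (tendsto_id.const_mul_atTop two_pos)
  exact ge_of_tendsto hlim ((eventually_gt_atTop 0).mono hk)

lemma norm_map_integral_smul_le {E F : Type*} [NormedAddCommGroup E] [NormedSpace ℝ E]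
    [NormedAddCommGroup F] [NormedSpace ℝ F] [CompleteSpace E] [CompleteSpace F]
    (π : E →L[ℝ] F) {g : α → ℝ} {X : α → E} (hg : ∀ x, 0 ≤ g x)
    (hgX : Integrable (fun x => g x • X x) μ) :
    ‖π (∫ x, g x • X x ∂μ)‖ ≤ ∫ x, g x * ‖π (X x)‖ ∂μ := by
  rw [← π.integral_comp_comm hgX]
  refine (norm_integral_le_integral_norm _).trans_eq ?_
  simp only [map_smul, norm_smul, Real.norm_of_nonneg (hg _)]

lemma integral_smul_apply {ι : Type*} [Fintype ι] {g : α → ℝ} {X : α → EuclideanSpace ℝ ι}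
    (hgX : Integrable (fun x => g x • X x) μ) (i : ι) :
    (∫ x, g x • X x ∂μ) i = ∫ x, g x * X x i ∂μ := by
  have h := (EuclideanSpace.proj i).integral_comp_comm hgX
  simp only [map_smul, PiLp.proj_apply, smul_eq_mul] at h
  exact h.symm
end

noncomputable def transverse : EuclideanSpace ℝ (Fin 3) →L[ℝ] EuclideanSpace ℝ (Fin 2) :=
  (EuclideanSpace.proj 0).smulRight (EuclideanSpace.single 0 1) +
    (EuclideanSpace.proj 1).smulRight (EuclideanSpace.single 1 1)

lemma norm_transverse (r : EuclideanSpace ℝ (Fin 3)) :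
    ‖transverse r‖ = √(r 0 ^ 2 + r 1 ^ 2) := by
  simp [transverse, EuclideanSpace.norm_eq, Fin.sum_univ_two]

lemma norm_transverse_sq_le {r : EuclideanSpace ℝ (Fin 3)} (hr : ‖r‖ ≤ 1) :
    ‖transverse r‖ ^ 2 ≤ 2 * (1 - r 2) := by
  have h := EuclideanSpace.real_norm_sq_eq r
  rw [Fin.sum_univ_three] at h
  rw [norm_transverse, Real.sq_sqrt (by positivity)]
  nlinarith [sq_nonneg (1 - r 2), pow_le_one₀ (norm_nonneg r) hr (n := 2)]

theorem stmt2 (ν : Measure (EuclideanSpace ℝ (Fin 3))) [IsFiniteMeasure ν]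
    (hball : ν {r : EuclideanSpace ℝ (Fin 3) | ‖r‖ ≤ 1}ᶜ = 0)
    (f : ℝ → EuclideanSpace ℝ (Fin 3) → ℝ)
    (hmeas : ∀ t, Measurable (f t))
    (hf : ∀ t r, 0 ≤ f t r ∧ f t r ≤ 1)
    (m : ℝ → ℝ) (hm : ∀ t, m t = ∫ r, f t r ∂ν)
    (R : ℝ → EuclideanSpace ℝ (Fin 3)) (hR : ∀ t, R t = ∫ r, f t r • r ∂ν)
    (L C : ℝ) (hL : 0 < L)
    (ε : ℝ) (hε : 0 < ε)
    (hscal : ∀ t ∈ Ioo (0 : ℝ) ε,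
      L * t ≤ Real.sqrt ((R t 0) ^ 2 + (R t 1) ^ 2) ∧ m t - R t 2 ≤ C * t ^ 2) :
    False := by
  have hν : ∀ᵐ r ∂ν, ‖r‖ ≤ 1 := mem_ae_iff.2 hball
  have hid : Integrable (fun r => r) ν := .of_bound aestronglyMeasurable_id 1 hν
  have hf_bdd : ∀ t, ∀ᵐ r ∂ν, ‖f t r‖ ≤ 1 := fun t => ae_of_all _ fun r => by
    rw [Real.norm_of_nonneg (hf t r).1]; exact (hf t r).2
  have hfr : ∀ t, Integrable (fun r => f t r • r) ν := fun t =>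
    hid.bdd_smul 1 (hmeas t).aestronglyMeasurable (hf_bdd t)
  have hz : Integrable (fun r : EuclideanSpace ℝ (Fin 3) => r 2) ν :=
    (EuclideanSpace.proj (𝕜 := ℝ) 2).integrable_comp hid
  have hheight : ∀ t, ∫ r, f t r * (2 * (1 - r 2)) ∂ν = 2 * (m t - R t 2) := by
    intro t
    have hfz : Integrable (fun r => f t r * r 2) ν :=
      hz.bdd_mul (hmeas t).aestronglyMeasurable (hf_bdd t)
    rw [hm, hR, integral_smul_apply (hfr t),
      ← integral_sub (.of_bound (hmeas t).aestronglyMeasurable 1 (hf_bdd t)) hfz,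
      ← integral_const_mul]
    congr 1 with r
    ring
  refine hL.not_ge (nonpos_of_mul_le_integral_of_integral_le_mul_sq (μ := ν)
    (u := fun r => 2 * (1 - r 2)) (w := fun r => ‖transverse r‖) (by fun_prop) (by fun_prop)
    (((integrable_const 1).sub hz).const_mul 2)
    (transverse.integrable_comp hid).norm (hν.mono fun r => norm_transverse_sq_le)
    (fun t => (hmeas t).aestronglyMeasurable) hf (C := 2 * C) hε fun t ht => ⟨?_, ?_⟩)
  · calc L * t ≤ √((R t 0) ^ 2 + (R t 1) ^ 2) := (hscal t ht).1
      _ = ‖transverse (R t)‖ := (norm_transverse _).symm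
      _ ≤ _ := hR t ▸ norm_map_integral_smul_le transverse (fun r => (hf t r).1) (hfr t)
  · rw [hheight]
    linarith [(hscal t ht).2]
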